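/- Let d ≥ 1, γ ≥ 0, μ > γ/2, and let F, G : [−π,π]^d → ℂ be continuous. Define φ(t,n) := (2π)^{−d} ∫_{[−π,π]^d} e^{i p·n} ( Ĉ(t,p) F(p) + Ŝ(t,p) G(p) ) dp for t ≥ 0 and n ∈ ℤ^d. Then for each n ∈ ℤ^d the map t ↦ φ(t,n) is twice differentiable on [0,∞) and satisfies ∂ₜ²φ(t,n) + γ ∂ₜφ(t,n) − (Δ₁φ)(t,n) + μ² φ(t,n) = 0 for all t ≥ 0, where (Δ₁φ)(t,n) = ∑_{j=1}^d ( φ(t,n+e_j) + φ(t,n−e_j) − 2φ(t,n) ), together with the initial conditions φ(0,n) = (2π)^{−d} ∫_{[−π,π]^d} e^{i p·n} F(p) dp and ∂ₜφ(0,n) = (2π)^{−d} ∫_{[−π,π]^d} e^{i p·n} G(p) dp. -/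

import Mathlib

open scoped BigOperators

/-- `ω(p)² = Ω(p) + μ²` with `Ω(p) = 2 ∑_j (1 − cos p_j)` (lattice dispersion, mesh 1). -/
noncomputable def omegaSq (d : ℕ) (μ : ℝ) (p : Fin d → ℝ) : ℝ :=
  2 * ∑ j : Fin d, (1 - Real.cos (p j)) + μ ^ 2

/-- `r₊(p) = (−γ + √(γ² − 4ω(p)²))/2`, principal complex square root. -/
noncomputable def rPlusP (d : ℕ) (γ μ : ℝ) (p : Fin d → ℝ) : ℂ :=
  (-(γ : ℂ) + ((γ : ℂ) ^ 2 - 4 * (omegaSq d μ p : ℂ)) ^ ((1 : ℂ) / 2)) / 2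

/-- `r₋(p) = (−γ − √(γ² − 4ω(p)²))/2`, principal complex square root. -/
noncomputable def rMinusP (d : ℕ) (γ μ : ℝ) (p : Fin d → ℝ) : ℂ :=
  (-(γ : ℂ) - ((γ : ℂ) ^ 2 - 4 * (omegaSq d μ p : ℂ)) ^ ((1 : ℂ) / 2)) / 2

/-- `Ŝ(t,p) = (e^{r₊(p) t} − e^{r₋(p) t})/(r₊(p) − r₋(p))`. -/
noncomputable def Shat (d : ℕ) (γ μ : ℝ) (t : ℝ) (p : Fin d → ℝ) : ℂ :=
  (Complex.exp (rPlusP d γ μ p * t) - Complex.exp (rMinusP d γ μ p * t)) /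
    (rPlusP d γ μ p - rMinusP d γ μ p)

/-- `Ĉ(t,p) = (r₊(p) e^{r₋(p) t} − r₋(p) e^{r₊(p) t})/(r₊(p) − r₋(p))`. -/
noncomputable def Chat (d : ℕ) (γ μ : ℝ) (t : ℝ) (p : Fin d → ℝ) : ℂ :=
  (rPlusP d γ μ p * Complex.exp (rMinusP d γ μ p * t)
      - rMinusP d γ μ p * Complex.exp (rPlusP d γ μ p * t)) /
    (rPlusP d γ μ p - rMinusP d γ μ p)

/-- The homogeneous solution
`φ(t,n) = (2π)^{−d} ∫_{[−π,π]^d} e^{i p·n} ( Ĉ(t,p) F(p) + Ŝ(t,p) G(p) ) dp`. -/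
noncomputable def homSol (d : ℕ) (γ μ : ℝ) (F G : (Fin d → ℝ) → ℂ)
    (t : ℝ) (n : Fin d → ℤ) : ℂ :=
  (((2 * Real.pi) ^ d : ℝ) : ℂ)⁻¹ *
    ∫ p in Set.Icc (fun _ : Fin d => -Real.pi) (fun _ : Fin d => Real.pi),
      Complex.exp (Complex.I * ((∑ j : Fin d, p j * (n j : ℝ) : ℝ) : ℂ)) *
        (Chat d γ μ t p * F p + Shat d γ μ t p * G p)

/-!
Each Fourier mode `û(t,p) = Ĉ(t,p) F(p) + Ŝ(t,p) G(p)` solves the damped oscillator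
`û'' + γ û' + ω(p)² û = 0`. Since `r₊ + r₋ = -γ` and `r₊ r₋ = ω²`, the propagators satisfy
`Ĉ' = -ω² Ŝ` and `Ŝ' = Ĉ - γ Ŝ`, so the time derivative of the mode with data `(F, G)` is the mode
with data `(G, -ω² F - γ G)`; iterating once more, the oscillator equation is a polynomial identity.
On the lattice side, shifting `n` by `±e_j` multiplies the plane wave `e^{i p·n}` by `e^{±i p_j}`,
so the lattice Laplacian becomes multiplication by `-Ω(p)`, and `Ω + μ² = ω²`.
Differentiation under the integral is justified by compactness of `[-π,π]^d`. The mass gap keeps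
the discriminant `γ² - 4ω²` negative: the principal square root is then `i √(4ω² - γ²)`, so `r±`
are continuous in `p` and distinct.
-/

open MeasureTheory Set Function

theorem hasDerivAt_setIntegral_of_continuousOn_deriv {X E : Type*} [TopologicalSpace X]
    [T2Space X] [MeasurableSpace X] [OpensMeasurableSpace X] [NormedAddCommGroup E]
    [NormedSpace ℝ E] {μ : Measure X} [IsFiniteMeasureOnCompacts μ] {K : Set X}
    (hK : IsCompact K) {f f' : ℝ → X → E} (hf : ∀ τ, ContinuousOn (f τ) K)
    (hf' : ContinuousOn (uncurry f') (univ ×ˢ K))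
    (hderiv : ∀ τ, ∀ p ∈ K, HasDerivAt (f · p) (f' τ p) τ) (t : ℝ) :
    HasDerivAt (fun τ => ∫ p in K, f τ p ∂μ) (∫ p in K, f' t p ∂μ) t := by
  obtain ⟨C, hC⟩ := ((isCompact_closedBall t 1).prod hK).exists_bound_of_continuousOn
    (hf'.mono (prod_mono (subset_univ _) le_rfl))
  have hK_ae : ∀ᵐ p ∂μ.restrict K, p ∈ K := ae_restrict_mem hK.measurableSet
  refine (hasDerivAt_integral_of_dominated_loc_of_deriv_le (bound := fun _ => C)
    (Metric.ball_mem_nhds t one_pos)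
    (Filter.Eventually.of_forall fun τ => ((hf τ).integrableOn_compact hK).aestronglyMeasurable)
    ((hf t).integrableOn_compact hK) ?_ ?_ ?_ ?_).2
  · have hcont : ContinuousOn (f' t) K :=
      hf'.comp (Continuous.prodMk_right t).continuousOn fun p hp => ⟨mem_univ t, hp⟩
    exact (hcont.integrableOn_compact hK).aestronglyMeasurable
  · filter_upwards [hK_ae] with p hp τ hτ
    exact hC (τ, p) ⟨Metric.ball_subset_closedBall hτ, hp⟩
  · exact integrableOn_const hK.measure_ne_top
  · filter_upwards [hK_ae] with p hp τ _
    exact hderiv τ p hp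

open Complex

lemma cpow_one_half_of_nonpos {x : ℝ} (hx : x ≤ 0) :
    (x : ℂ) ^ ((1 : ℂ) / 2) = I * (√(-x) : ℝ) := by
  have hsqrt : ((-x : ℝ) : ℂ) ^ ((1 : ℂ) / 2) = (√(-x) : ℝ) := by
    rw [Real.sqrt_eq_rpow, ofReal_cpow (neg_nonneg.2 hx)]
    norm_num
  rw [ofReal_cpow_of_nonpos hx, ← ofReal_neg, hsqrt, mul_one_div,
    mul_div_right_comm, exp_pi_div_two_mul_I, mul_comm]

section Roots

variable {d : ℕ} {γ μ : ℝ}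

lemma sq_lt_four_mul_omegaSq (hγ : 0 ≤ γ) (hmass : γ / 2 < μ) (p : Fin d → ℝ) :
    γ ^ 2 < 4 * omegaSq d μ p := by
  have hcos : 0 ≤ ∑ j : Fin d, (1 - Real.cos (p j)) :=
    Finset.sum_nonneg fun j _ => sub_nonneg.2 (Real.cos_le_one _)
  rw [omegaSq]
  nlinarith

lemma continuous_omegaSq : Continuous (omegaSq d μ) := by
  unfold omegaSq
  fun_prop

lemma rPlusP_add_rMinusP (p : Fin d → ℝ) : rPlusP d γ μ p + rMinusP d γ μ p = -γ := by
  rw [rPlusP, rMinusP]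
  ring

lemma rPlusP_mul_rMinusP (p : Fin d → ℝ) : rPlusP d γ μ p * rMinusP d γ μ p = omegaSq d μ p := by
  have hsq := cpow_nat_inv_pow ((γ : ℂ) ^ 2 - 4 * (omegaSq d μ p : ℂ)) two_ne_zero
  rw [Nat.cast_ofNat, inv_eq_one_div] at hsq
  rw [rPlusP, rMinusP]
  linear_combination (-1 / 4 : ℂ) * hsq

lemma rPlusP_sub_rMinusP_ne_zero {p : Fin d → ℝ} (hp : γ ^ 2 ≠ 4 * omegaSq d μ p) :
    rPlusP d γ μ p - rMinusP d γ μ p ≠ 0 := by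
  have hdisc : (γ : ℂ) ^ 2 - 4 * (omegaSq d μ p : ℂ) ≠ 0 := by
    exact_mod_cast sub_ne_zero.2 hp
  rw [rPlusP, rMinusP, ← sub_div, add_sub_sub_cancel, ← two_mul,
    mul_div_cancel_left₀ _ two_ne_zero]
  exact (cpow_ne_zero_iff_of_exponent_ne_zero (one_div_ne_zero two_ne_zero)).2 hdisc

lemma sqrt_disc_eq {p : Fin d → ℝ} (hp : γ ^ 2 ≤ 4 * omegaSq d μ p) :
    ((γ : ℂ) ^ 2 - 4 * (omegaSq d μ p : ℂ)) ^ ((1 : ℂ) / 2)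
      = I * (√(4 * omegaSq d μ p - γ ^ 2) : ℝ) := by
  have h := cpow_one_half_of_nonpos (sub_nonpos.2 hp)
  push_cast at h
  rwa [neg_sub] at h

lemma continuous_rPlusP (hγ : 0 ≤ γ) (hmass : γ / 2 < μ) : Continuous (rPlusP d γ μ) := by
  have h : rPlusP d γ μ = fun p => (-γ + I * (√(4 * omegaSq d μ p - γ ^ 2) : ℝ)) / 2 :=
    funext fun p => by rw [rPlusP, sqrt_disc_eq (sq_lt_four_mul_omegaSq hγ hmass p).le]
  have := continuous_omegaSq (d := d) (μ := μ)
  rw [h]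
  fun_prop

lemma continuous_rMinusP (hγ : 0 ≤ γ) (hmass : γ / 2 < μ) : Continuous (rMinusP d γ μ) := by
  have h : rMinusP d γ μ = fun p => (-γ - I * (√(4 * omegaSq d μ p - γ ^ 2) : ℝ)) / 2 :=
    funext fun p => by rw [rMinusP, sqrt_disc_eq (sq_lt_four_mul_omegaSq hγ hmass p).le]
  have := continuous_omegaSq (d := d) (μ := μ)
  rw [h]
  fun_prop

end Roots

section Propagators

variable {d : ℕ} {γ μ : ℝ}

lemma hasDerivAt_cexp_mul_ofReal (r : ℂ) (t : ℝ) :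
    HasDerivAt (fun τ : ℝ => cexp (r * τ)) (r * cexp (r * t)) t := by
  simpa [mul_comm] using ((hasDerivAt_id (t : ℂ)).const_mul r).cexp.comp_ofReal

lemma hasDerivAt_Chat (p : Fin d → ℝ) (t : ℝ) :
    HasDerivAt (fun τ => Chat d γ μ τ p) (-(omegaSq d μ p : ℂ) * Shat d γ μ t p) t := by
  unfold Chat
  refine ((((hasDerivAt_cexp_mul_ofReal _ t).const_mul _).sub
    ((hasDerivAt_cexp_mul_ofReal _ t).const_mul _)).div_const _).congr_deriv ?_
  rw [Shat, ← rPlusP_mul_rMinusP]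
  ring

lemma hasDerivAt_Shat (p : Fin d → ℝ) (t : ℝ) :
    HasDerivAt (fun τ => Shat d γ μ τ p) (Chat d γ μ t p - γ * Shat d γ μ t p) t := by
  unfold Shat
  refine (((hasDerivAt_cexp_mul_ofReal _ t).sub
    (hasDerivAt_cexp_mul_ofReal _ t)).div_const _).congr_deriv ?_
  rw [Chat]
  linear_combination (cexp (rPlusP d γ μ p * t) - cexp (rMinusP d γ μ p * t)) /
    (rPlusP d γ μ p - rMinusP d γ μ p) * rPlusP_add_rMinusP p

lemma Chat_zero {p : Fin d → ℝ} (hp : γ ^ 2 ≠ 4 * omegaSq d μ p) : Chat d γ μ 0 p = 1 := by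
  simpa [Chat] using div_self (rPlusP_sub_rMinusP_ne_zero hp)

lemma Shat_zero (p : Fin d → ℝ) : Shat d γ μ 0 p = 0 := by
  simp [Shat]

lemma continuous_Chat (hγ : 0 ≤ γ) (hmass : γ / 2 < μ) : Continuous (uncurry (Chat d γ μ)) := by
  have := continuous_rPlusP (d := d) hγ hmass
  have := continuous_rMinusP (d := d) hγ hmass
  unfold Chat
  exact Continuous.div (by fun_prop) (by fun_prop)
    fun q => rPlusP_sub_rMinusP_ne_zero (sq_lt_four_mul_omegaSq hγ hmass q.2).ne

lemma continuous_Shat (hγ : 0 ≤ γ) (hmass : γ / 2 < μ) : Continuous (uncurry (Shat d γ μ)) := by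
  have := continuous_rPlusP (d := d) hγ hmass
  have := continuous_rMinusP (d := d) hγ hmass
  unfold Shat
  exact Continuous.div (by fun_prop) (by fun_prop)
    fun q => rPlusP_sub_rMinusP_ne_zero (sq_lt_four_mul_omegaSq hγ hmass q.2).ne

end Propagators

abbrev brillouinZone (d : ℕ) : Set (Fin d → ℝ) :=
  Icc (fun _ : Fin d => -Real.pi) (fun _ : Fin d => Real.pi)

section FourierModes

variable {d : ℕ} {γ μ : ℝ}

noncomputable def homSolHat (d : ℕ) (γ μ : ℝ) (F G : (Fin d → ℝ) → ℂ) (t : ℝ) (p : Fin d → ℝ) :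
    ℂ :=
  Chat d γ μ t p * F p + Shat d γ μ t p * G p

noncomputable def accelData (d : ℕ) (γ μ : ℝ) (F G : (Fin d → ℝ) → ℂ) (p : Fin d → ℝ) : ℂ :=
  -(omegaSq d μ p : ℂ) * F p - γ * G p

lemma hasDerivAt_homSolHat (F G : (Fin d → ℝ) → ℂ) (p : Fin d → ℝ) (t : ℝ) :
    HasDerivAt (fun τ => homSolHat d γ μ F G τ p) (homSolHat d γ μ G (accelData d γ μ F G) t p) t :=
  (((hasDerivAt_Chat p t).mul_const (F p)).add ((hasDerivAt_Shat p t).mul_const (G p))).congr_deriv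
    (by unfold homSolHat accelData; ring)

lemma homSolHat_zero (F G : (Fin d → ℝ) → ℂ) {p : Fin d → ℝ} (hp : γ ^ 2 ≠ 4 * omegaSq d μ p) :
    homSolHat d γ μ F G 0 p = F p := by
  simp [homSolHat, Chat_zero hp, Shat_zero]

lemma homSolHat_damped_ode (F G : (Fin d → ℝ) → ℂ) (t : ℝ) (p : Fin d → ℝ) :
    homSolHat d γ μ (accelData d γ μ F G) (accelData d γ μ G (accelData d γ μ F G)) t p
      + γ * homSolHat d γ μ G (accelData d γ μ F G) t p
      + omegaSq d μ p * homSolHat d γ μ F G t p = 0 := by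
  unfold homSolHat accelData
  ring

variable {F G : (Fin d → ℝ) → ℂ} {K : Set (Fin d → ℝ)}

lemma continuousOn_accelData (hF : ContinuousOn F K) (hG : ContinuousOn G K) :
    ContinuousOn (accelData d γ μ F G) K := by
  have := continuous_omegaSq (d := d) (μ := μ)
  unfold accelData
  fun_prop

lemma continuousOn_uncurry_homSolHat (hγ : 0 ≤ γ) (hmass : γ / 2 < μ)
    (hF : ContinuousOn F K) (hG : ContinuousOn G K) :
    ContinuousOn (uncurry (homSolHat d γ μ F G)) (univ ×ˢ K) := by
  have hsnd : MapsTo (Prod.snd : ℝ × (Fin d → ℝ) → _) (univ ×ˢ K) K := fun q hq => hq.2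
  exact ((continuous_Chat hγ hmass).continuousOn.mul (hF.comp continuous_snd.continuousOn hsnd)).add
    ((continuous_Shat hγ hmass).continuousOn.mul (hG.comp continuous_snd.continuousOn hsnd))

lemma continuousOn_homSolHat (hγ : 0 ≤ γ) (hmass : γ / 2 < μ)
    (hF : ContinuousOn F K) (hG : ContinuousOn G K) (t : ℝ) :
    ContinuousOn (homSolHat d γ μ F G t) K :=
  (continuousOn_uncurry_homSolHat hγ hmass hF hG).comp (f := fun p => (t, p))
    (Continuous.prodMk_right t).continuousOn fun _ hp => ⟨mem_univ t, hp⟩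

end FourierModes

section LatticeFourier

variable {d : ℕ}

noncomputable def planeWave (n : Fin d → ℤ) (p : Fin d → ℝ) : ℂ :=
  cexp (I * ((∑ j : Fin d, p j * (n j : ℝ) : ℝ) : ℂ))

noncomputable def latticeFourier (h : (Fin d → ℝ) → ℂ) (n : Fin d → ℤ) : ℂ :=
  (((2 * Real.pi) ^ d : ℝ) : ℂ)⁻¹ * ∫ p in brillouinZone d, planeWave n p * h p

lemma continuous_planeWave (n : Fin d → ℤ) : Continuous (planeWave n) := by
  unfold planeWave
  fun_prop

lemma planeWave_add_single (n : Fin d → ℤ) (j : Fin d) (p : Fin d → ℝ) :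
    planeWave (n + Pi.single j 1) p = planeWave n p * cexp (I * p j) := by
  simp only [planeWave, ← exp_add, Pi.add_apply, Int.cast_add, mul_add, Finset.sum_add_distrib,
    Pi.single_apply, Int.cast_ite, Int.cast_one, Int.cast_zero, mul_ite, mul_one, mul_zero,
    Finset.sum_ite_eq', Finset.mem_univ, if_true]
  push_cast
  ring_nf

lemma planeWave_sub_single (n : Fin d → ℤ) (j : Fin d) (p : Fin d → ℝ) :
    planeWave (n - Pi.single j 1) p = planeWave n p * cexp (-(I * p j)) := by
  simp only [planeWave, ← exp_add, Pi.sub_apply, Int.cast_sub, mul_sub, Finset.sum_sub_distrib,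
    Pi.single_apply, Int.cast_ite, Int.cast_one, Int.cast_zero, mul_ite, mul_one, mul_zero,
    Finset.sum_ite_eq', Finset.mem_univ, if_true]
  push_cast
  ring_nf

lemma cexp_I_mul_add_cexp_neg_I_mul (x : ℝ) :
    cexp (I * x) + cexp (-(I * x)) = 2 * Real.cos x := by
  rw [ofReal_cos, Complex.cos]
  ring_nf

lemma latticeFourier_const_mul (c : ℂ) (h : (Fin d → ℝ) → ℂ) (n : Fin d → ℤ) :
    latticeFourier (fun p => c * h p) n = c * latticeFourier h n := by
  simp only [latticeFourier, mul_left_comm _ c, integral_const_mul]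

lemma latticeFourier_add_single (h : (Fin d → ℝ) → ℂ) (n : Fin d → ℤ) (j : Fin d) :
    latticeFourier h (n + Pi.single j 1) = latticeFourier (fun p => cexp (I * p j) * h p) n := by
  simp only [latticeFourier, planeWave_add_single, mul_assoc]

lemma latticeFourier_sub_single (h : (Fin d → ℝ) → ℂ) (n : Fin d → ℤ) (j : Fin d) :
    latticeFourier h (n - Pi.single j 1)
      = latticeFourier (fun p => cexp (-(I * p j)) * h p) n := by
  simp only [latticeFourier, planeWave_sub_single, mul_assoc]

variable {h h₁ h₂ : (Fin d → ℝ) → ℂ}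

lemma integrableOn_planeWave_mul (n : Fin d → ℤ) (hh : ContinuousOn h (brillouinZone d)) :
    IntegrableOn (fun p => planeWave n p * h p) (brillouinZone d) :=
  ((continuous_planeWave n).continuousOn.mul hh).integrableOn_compact isCompact_Icc

lemma latticeFourier_add (hh₁ : ContinuousOn h₁ (brillouinZone d))
    (hh₂ : ContinuousOn h₂ (brillouinZone d)) (n : Fin d → ℤ) :
    latticeFourier (fun p => h₁ p + h₂ p) n = latticeFourier h₁ n + latticeFourier h₂ n := by
  simp only [latticeFourier, mul_add]
  rw [integral_add (integrableOn_planeWave_mul n hh₁) (integrableOn_planeWave_mul n hh₂), mul_add]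

lemma latticeFourier_sub (hh₁ : ContinuousOn h₁ (brillouinZone d))
    (hh₂ : ContinuousOn h₂ (brillouinZone d)) (n : Fin d → ℤ) :
    latticeFourier (fun p => h₁ p - h₂ p) n = latticeFourier h₁ n - latticeFourier h₂ n := by
  simp only [latticeFourier, mul_sub]
  rw [integral_sub (integrableOn_planeWave_mul n hh₁) (integrableOn_planeWave_mul n hh₂), mul_sub]

lemma latticeFourier_sum {ι : Type*} (s : Finset ι) {H : ι → (Fin d → ℝ) → ℂ}
    (hH : ∀ i ∈ s, ContinuousOn (H i) (brillouinZone d)) (n : Fin d → ℤ) :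
    latticeFourier (fun p => ∑ i ∈ s, H i p) n = ∑ i ∈ s, latticeFourier (H i) n := by
  simp only [latticeFourier, Finset.mul_sum]
  rw [integral_finsetSum s fun i hi => integrableOn_planeWave_mul n (hH i hi), Finset.mul_sum]

lemma latticeFourier_laplacian (hh : ContinuousOn h (brillouinZone d)) (n : Fin d → ℤ) :
    ∑ j : Fin d, (latticeFourier h (n + Pi.single j 1) + latticeFourier h (n - Pi.single j 1)
        - 2 * latticeFourier h n)
      = -latticeFourier (fun p => ((2 * ∑ j : Fin d, (1 - Real.cos (p j)) : ℝ) : ℂ) * h p) n := by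
  have hsymbol : ∀ j : Fin d, latticeFourier h (n + Pi.single j 1)
      + latticeFourier h (n - Pi.single j 1) - 2 * latticeFourier h n
      = latticeFourier (fun p => (cexp (I * p j) + cexp (-(I * p j)) - 2) * h p) n := by
    intro j
    rw [latticeFourier_add_single, latticeFourier_sub_single, ← latticeFourier_const_mul,
      ← latticeFourier_add, ← latticeFourier_sub]
    · simp only [sub_mul, add_mul]
    all_goals fun_prop
  rw [Finset.sum_congr rfl fun j _ => hsymbol j, ← latticeFourier_sum _ fun j _ => by fun_prop,
    ← neg_one_mul, ← latticeFourier_const_mul]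
  congr 1
  funext p
  simp only [cexp_I_mul_add_cexp_neg_I_mul]
  push_cast
  rw [Finset.mul_sum, Finset.sum_mul, Finset.mul_sum]
  exact Finset.sum_congr rfl fun j _ => by ring

end LatticeFourier

section HomogeneousSolution

variable {d : ℕ} {γ μ : ℝ} {F G : (Fin d → ℝ) → ℂ}

lemma homSol_eq_latticeFourier (F G : (Fin d → ℝ) → ℂ) (t : ℝ) (n : Fin d → ℤ) :
    homSol d γ μ F G t n = latticeFourier (homSolHat d γ μ F G t) n :=
  rfl

lemma homSol_zero (hγ : 0 ≤ γ) (hmass : γ / 2 < μ) (F G : (Fin d → ℝ) → ℂ) (n : Fin d → ℤ) :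
    homSol d γ μ F G 0 n = latticeFourier F n :=
  congrArg (latticeFourier · n) (funext fun p =>
    homSolHat_zero F G (sq_lt_four_mul_omegaSq hγ hmass p).ne)

lemma hasDerivAt_homSol (hγ : 0 ≤ γ) (hmass : γ / 2 < μ) (hF : ContinuousOn F (brillouinZone d))
    (hG : ContinuousOn G (brillouinZone d)) (n : Fin d → ℤ) (t : ℝ) :
    HasDerivAt (fun τ => homSol d γ μ F G τ n) (homSol d γ μ G (accelData d γ μ F G) t n) t := by
  have hderiv : ContinuousOn
      (uncurry fun τ p => planeWave n p * homSolHat d γ μ G (accelData d γ μ F G) τ p)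
      (univ ×ˢ brillouinZone d) :=
    ((continuous_planeWave n).comp continuous_snd).continuousOn.mul
      (continuousOn_uncurry_homSolHat hγ hmass hG (continuousOn_accelData hF hG))
  simp only [homSol_eq_latticeFourier, latticeFourier]
  exact (hasDerivAt_setIntegral_of_continuousOn_deriv isCompact_Icc
    (fun τ => (continuous_planeWave n).continuousOn.mul (continuousOn_homSolHat hγ hmass hF hG τ))
    hderiv (fun τ p _ => (hasDerivAt_homSolHat F G p τ).const_mul _) t).const_mul _

lemma homSol_damped_lattice_KG (hγ : 0 ≤ γ) (hmass : γ / 2 < μ)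
    (hF : ContinuousOn F (brillouinZone d)) (hG : ContinuousOn G (brillouinZone d))
    (t : ℝ) (n : Fin d → ℤ) :
    homSol d γ μ (accelData d γ μ F G) (accelData d γ μ G (accelData d γ μ F G)) t n
      + γ * homSol d γ μ G (accelData d γ μ F G) t n
      - ∑ j : Fin d, (homSol d γ μ F G t (n + Pi.single j 1)
          + homSol d γ μ F G t (n - Pi.single j 1) - 2 * homSol d γ μ F G t n)
      + μ ^ 2 * homSol d γ μ F G t n = 0 := by
  have hA := continuousOn_accelData (γ := γ) (μ := μ) hF hG
  have hu₀ := continuousOn_homSolHat hγ hmass hF hG t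
  have hu₁ := continuousOn_homSolHat hγ hmass hG hA t
  have hu₂ := continuousOn_homSolHat hγ hmass hA (continuousOn_accelData (γ := γ) (μ := μ) hG hA) t
  have hode : ∀ p,
      homSolHat d γ μ (accelData d γ μ F G) (accelData d γ μ G (accelData d γ μ F G)) t p
      + γ * homSolHat d γ μ G (accelData d γ μ F G) t p
      + ((2 * ∑ j : Fin d, (1 - Real.cos (p j)) : ℝ) : ℂ) * homSolHat d γ μ F G t p
      + μ ^ 2 * homSolHat d γ μ F G t p = 0 := fun p => by
    have h := homSolHat_damped_ode (γ := γ) (μ := μ) F G t p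
    rw [omegaSq] at h
    push_cast at h ⊢
    linear_combination h
  simp only [homSol_eq_latticeFourier]
  rw [latticeFourier_laplacian hu₀, sub_neg_eq_add, ← latticeFourier_const_mul,
    ← latticeFourier_const_mul, ← latticeFourier_add, ← latticeFourier_add, ← latticeFourier_add]
  · simp only [latticeFourier, hode, mul_zero, integral_zero]
  all_goals fun_prop

end HomogeneousSolution

theorem homogeneous_solution_lattice_KG_general
    (d : ℕ) (γ μ : ℝ) (hγ : 0 ≤ γ) (hmass : γ / 2 < μ)
    (F G : (Fin d → ℝ) → ℂ)
    (hF : ContinuousOn F (Set.Icc (fun _ : Fin d => -Real.pi) (fun _ : Fin d => Real.pi)))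
    (hG : ContinuousOn G (Set.Icc (fun _ : Fin d => -Real.pi) (fun _ : Fin d => Real.pi))) :
    ∃ φ' φ'' : ℝ → (Fin d → ℤ) → ℂ,
      (∀ n : Fin d → ℤ, ∀ t : ℝ, 0 ≤ t →
        HasDerivWithinAt (fun τ : ℝ => homSol d γ μ F G τ n) (φ' t n) (Set.Ici 0) t) ∧
      (∀ n : Fin d → ℤ, ∀ t : ℝ, 0 ≤ t →
        HasDerivWithinAt (fun τ : ℝ => φ' τ n) (φ'' t n) (Set.Ici 0) t) ∧
      (∀ n : Fin d → ℤ, ∀ t : ℝ, 0 ≤ t →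
        φ'' t n + (γ : ℂ) * φ' t n
          - (∑ j : Fin d, (homSol d γ μ F G t (n + Pi.single j 1)
              + homSol d γ μ F G t (n - Pi.single j 1) - 2 * homSol d γ μ F G t n))
          + ((μ : ℂ)) ^ 2 * homSol d γ μ F G t n = 0) ∧
      (∀ n : Fin d → ℤ,
        homSol d γ μ F G 0 n
          = (((2 * Real.pi) ^ d : ℝ) : ℂ)⁻¹ *
              ∫ p in Set.Icc (fun _ : Fin d => -Real.pi) (fun _ : Fin d => Real.pi),
                Complex.exp (Complex.I * ((∑ j : Fin d, p j * (n j : ℝ) : ℝ) : ℂ)) * F p) ∧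
      (∀ n : Fin d → ℤ,
        φ' 0 n
          = (((2 * Real.pi) ^ d : ℝ) : ℂ)⁻¹ *
              ∫ p in Set.Icc (fun _ : Fin d => -Real.pi) (fun _ : Fin d => Real.pi),
                Complex.exp (Complex.I * ((∑ j : Fin d, p j * (n j : ℝ) : ℝ) : ℂ)) * G p) := by
  have hA := continuousOn_accelData (γ := γ) (μ := μ) hF hG
  exact ⟨homSol d γ μ G (accelData d γ μ F G),
    homSol d γ μ (accelData d γ μ F G) (accelData d γ μ G (accelData d γ μ F G)),
    fun n t _ => (hasDerivAt_homSol hγ hmass hF hG n t).hasDerivWithinAt,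
    fun n t _ => (hasDerivAt_homSol hγ hmass hG hA n t).hasDerivWithinAt,
    fun n t _ => homSol_damped_lattice_KG hγ hmass hF hG t n,
    homSol_zero hγ hmass F G, homSol_zero hγ hmass G _⟩

theorem homogeneous_solution_lattice_KG
    (d : ℕ) (hd : 1 ≤ d) (γ μ : ℝ) (hγ : 0 ≤ γ) (hmass : γ / 2 < μ)
    (F G : (Fin d → ℝ) → ℂ)
    (hF : ContinuousOn F (Set.Icc (fun _ : Fin d => -Real.pi) (fun _ : Fin d => Real.pi)))
    (hG : ContinuousOn G (Set.Icc (fun _ : Fin d => -Real.pi) (fun _ : Fin d => Real.pi))) :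
    ∃ φ' φ'' : ℝ → (Fin d → ℤ) → ℂ,
      (∀ n : Fin d → ℤ, ∀ t : ℝ, 0 ≤ t →
        HasDerivWithinAt (fun τ : ℝ => homSol d γ μ F G τ n) (φ' t n) (Set.Ici 0) t) ∧
      (∀ n : Fin d → ℤ, ∀ t : ℝ, 0 ≤ t →
        HasDerivWithinAt (fun τ : ℝ => φ' τ n) (φ'' t n) (Set.Ici 0) t) ∧
      (∀ n : Fin d → ℤ, ∀ t : ℝ, 0 ≤ t →
        φ'' t n + (γ : ℂ) * φ' t n
          - (∑ j : Fin d, (homSol d γ μ F G t (n + Pi.single j 1)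
              + homSol d γ μ F G t (n - Pi.single j 1) - 2 * homSol d γ μ F G t n))
          + ((μ : ℂ)) ^ 2 * homSol d γ μ F G t n = 0) ∧
      (∀ n : Fin d → ℤ,
        homSol d γ μ F G 0 n
          = (((2 * Real.pi) ^ d : ℝ) : ℂ)⁻¹ *
              ∫ p in Set.Icc (fun _ : Fin d => -Real.pi) (fun _ : Fin d => Real.pi),
                Complex.exp (Complex.I * ((∑ j : Fin d, p j * (n j : ℝ) : ℝ) : ℂ)) * F p) ∧
      (∀ n : Fin d → ℤ,
        φ' 0 n
          = (((2 * Real.pi) ^ d : ℝ) : ℂ)⁻¹ *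
              ∫ p in Set.Icc (fun _ : Fin d => -Real.pi) (fun _ : Fin d => Real.pi),
                Complex.exp (Complex.I * ((∑ j : Fin d, p j * (n j : ℝ) : ℝ) : ℂ)) * G p) :=
  homogeneous_solution_lattice_KG_general d γ μ hγ hmass F G hF hG
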